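/- Gronwall-type energy estimate for the forced linear beam equation: Let L, ρ, μ, T > 0, let f : [0,T]×[0,L] → ℝ be continuous, and let w : [0,T]×[0,L] → ℝ be smooth (C² in t and C⁴ in x, with continuous mixed derivative ∂_t∂²ₓw) satisfying ρ∂²_t w = −μ∂⁴ₓw − f on [0,T]×(0,L), the boundary conditions ∂²ₓw(t,0) = ∂²ₓw(t,L) = ∂³ₓw(t,0) = ∂³ₓw(t,L) = 0 for all t ∈ [0,T], and the zero initial conditions w(0,·) = 0 and ∂_t w(0,·) = 0. Then for every t ∈ [0,T], ∫₀^L (ρ(∂_t w(t,x))² + μ(∂²ₓw(t,x))²)/2 dx ≤ (1/(2ρ)) ∫₀^t ∫₀^L e^{t−s} f(s,x)² dx ds. -/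

import Mathlib

/-!
Multiplying the equation by `∂ₜw` and integrating by parts twice in `x`, the free-end conditions
remove all boundary terms, so the energy `E t = ∫ (ρ (∂ₜw)² + μ (∂ₓ²w)²) / 2` satisfies
`E' = -∫ f ∂ₜw ≤ E + (1 / 2ρ) ∫ f²` by Young's inequality. As `E 0 = 0`, Gronwall's inequality
with a time-dependent forcing term gives the estimate.
-/

open MeasureTheory Filter Set intervalIntegral Real

open scoped Topology

section ParametricIntegral

variable {E : Type*} [NormedAddCommGroup E] [NormedSpace ℝ E] {a b : ℝ}

theorem continuousOn_intervalIntegral_of_continuousOn_uncurry {X : Type*} [TopologicalSpace X]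
    [FirstCountableTopology X]
    {F : X → ℝ → E} {s : Set X} (hs : IsCompact s)
    (hF : ContinuousOn (Function.uncurry F) (s ×ˢ uIcc a b)) :
    ContinuousOn (fun t => ∫ x in a..b, F t x) s := by
  obtain ⟨C, hC⟩ := (hs.prod isCompact_uIcc).exists_bound_of_continuousOn hF
  simp only [intervalIntegral_eq_integral_uIoc]
  refine ContinuousOn.const_smul (continuousOn_of_dominated (bound := fun _ => C) ?_ ?_ ?_ ?_) _
  · exact fun t ht => ((hF.uncurry_left t ht).mono uIoc_subset_uIcc).aestronglyMeasurable
      measurableSet_uIoc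
  · exact fun t ht => (ae_restrict_iff' measurableSet_uIoc).2 <| ae_of_all _
      fun x hx => hC (t, x) ⟨ht, uIoc_subset_uIcc hx⟩
  · exact integrableOn_const measure_Ioc_lt_top.ne
  · refine (ae_restrict_iff' measurableSet_uIoc).2 <| ae_of_all _ fun x hx => ?_
    exact hF.comp (Continuous.prodMk_left x).continuousOn
      fun t ht => ⟨ht, uIoc_subset_uIcc hx⟩

theorem hasDerivAt_intervalIntegral_of_continuousOn_uncurry {F F' : ℝ → ℝ → E} {s : Set ℝ}
    {t₀ : ℝ} (hs : IsCompact s) (ht₀ : s ∈ 𝓝 t₀) (hF : ∀ t ∈ s, ContinuousOn (F t) (uIcc a b))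
    (hF' : ContinuousOn (Function.uncurry F') (s ×ˢ uIcc a b))
    (hderiv : ∀ t ∈ s, ∀ x ∈ uIcc a b, HasDerivAt (F · x) (F' t x) t) :
    HasDerivAt (fun t => ∫ x in a..b, F t x) (∫ x in a..b, F' t₀ x) t₀ := by
  obtain ⟨C, hC⟩ := (hs.prod isCompact_uIcc).exists_bound_of_continuousOn hF'
  refine (hasDerivAt_integral_of_dominated_loc_of_deriv_le (bound := fun _ => C) ht₀ ?_
    ((hF _ (mem_of_mem_nhds ht₀)).intervalIntegrable) ?_ ?_ intervalIntegrable_const ?_).2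
  · exact eventually_of_mem ht₀ fun t ht =>
      ((hF t ht).mono uIoc_subset_uIcc).aestronglyMeasurable measurableSet_uIoc
  · exact ((hF'.uncurry_left t₀ (mem_of_mem_nhds ht₀)).mono uIoc_subset_uIcc).aestronglyMeasurable
      measurableSet_uIoc
  · exact ae_of_all _ fun x hx t ht => hC (t, x) ⟨ht, uIoc_subset_uIcc hx⟩
  · exact ae_of_all _ fun x hx t ht => hderiv t ht x (uIoc_subset_uIcc hx)

end ParametricIntegral

theorem intervalIntegral.integral_congr_Ioo {E : Type*} [NormedAddCommGroup E] [NormedSpace ℝ E]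
    {f g : ℝ → E} {a b : ℝ} (hab : a ≤ b) (h : EqOn f g (Ioo a b)) :
    ∫ x in a..b, f x = ∫ x in a..b, g x := by
  simp only [integral_of_le hab, integral_Ioc_eq_integral_Ioo]
  exact setIntegral_congr_fun measurableSet_Ioo h

theorem integral_mul_deriv_deriv_eq_deriv_deriv_mul {a b : ℝ} {u u' u'' v v' v'' : ℝ → ℝ}
    (hu : ∀ x ∈ uIcc a b, HasDerivAt u (u' x) x) (hu' : ∀ x ∈ uIcc a b, HasDerivAt u' (u'' x) x)
    (hv : ∀ x ∈ uIcc a b, HasDerivAt v (v' x) x) (hv' : ∀ x ∈ uIcc a b, HasDerivAt v' (v'' x) x)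
    (hu'' : IntervalIntegrable u'' volume a b) (hv'' : IntervalIntegrable v'' volume a b) :
    ∫ x in a..b, u x * v'' x
      = u b * v' b - u' b * v b - (u a * v' a - u' a * v a) + ∫ x in a..b, u'' x * v x := by
  have hcont : ∀ {f f' : ℝ → ℝ}, (∀ x ∈ uIcc a b, HasDerivAt f (f' x) x) →
      IntervalIntegrable f volume a b := fun hf =>
    ContinuousOn.intervalIntegrable fun x hx => (hf x hx).continuousAt.continuousWithinAt
  rw [integral_mul_deriv_eq_deriv_mul hu hv' (hcont hu') hv'',
    integral_mul_deriv_eq_deriv_mul hu' hv hu'' (hcont hv')]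
  ring

theorem le_exp_mul_add_integral_of_hasDerivAt_le_add {E D g : ℝ → ℝ} {a b : ℝ}
    (hE : ContinuousOn E (Icc a b)) (hg : ContinuousOn g (Icc a b))
    (hD : ∀ t ∈ Ioo a b, HasDerivAt E (D t) t) (hDle : ∀ t ∈ Ioo a b, D t ≤ E t + g t) :
    ∀ t ∈ Icc a b, E t ≤ exp (t - a) * E a + ∫ s in a..t, exp (t - s) * g s := by
  set h : ℝ → ℝ := fun s => exp (-s) * g s
  have hh : ContinuousOn h (Icc a b) := (continuous_exp.comp continuous_neg).continuousOn.mul hg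
  set Φ : ℝ → ℝ := fun τ => exp (-τ) * E τ - ∫ s in a..τ, h s
  have hΦ : ContinuousOn Φ (Icc a b) :=
    ((continuous_exp.comp continuous_neg).continuousOn.mul hE).sub
      ((continuousOn_primitive hh.integrableOn_Icc).congr fun x hx => integral_of_le hx.1)
  have hΦ' : ∀ t ∈ Ioo a b, HasDerivAt Φ (exp (-t) * (D t - E t - g t)) t := by
    intro t ht
    have hexp : HasDerivAt (fun τ => exp (-τ)) (-exp (-t)) t := by
      simpa using (hasDerivAt_neg t).exp
    have hprim : HasDerivAt (fun τ => ∫ s in a..τ, h s) (h t) t :=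
      integral_hasDerivAt_right
        ((hh.mono (Icc_subset_Icc_right ht.2.le)).intervalIntegrable_of_Icc ht.1.le)
        ((hh.mono Ioo_subset_Icc_self).stronglyMeasurableAtFilter isOpen_Ioo t ht)
        (hh.continuousAt (Icc_mem_nhds ht.1 ht.2))
    exact ((hexp.mul (hD t ht)).sub hprim).congr_deriv (by simp only [h]; ring)
  have hanti : AntitoneOn Φ (Icc a b) := by
    refine antitoneOn_of_hasDerivWithinAt_nonpos (f' := fun t => exp (-t) * (D t - E t - g t))
      (convex_Icc a b) hΦ (fun t ht => ?_) (fun t ht => ?_) <;> rw [interior_Icc] at ht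
    · exact (hΦ' t ht).hasDerivWithinAt
    · exact mul_nonpos_of_nonneg_of_nonpos (exp_pos _).le (by linarith [hDle t ht])
  intro t ht
  have hΦt : Φ t ≤ Φ a := hanti ⟨le_rfl, ht.1.trans ht.2⟩ ht ht.1
  have hexp_t : exp t * exp (-t) = 1 := by rw [← exp_add, add_neg_cancel, exp_zero]
  calc E t = exp t * Φ t + exp t * ∫ s in a..t, h s := by
        simp only [Φ]; linear_combination (-E t) * hexp_t
    _ ≤ exp t * Φ a + exp t * ∫ s in a..t, h s := by gcongr
    _ = exp (t - a) * E a + ∫ s in a..t, exp (t - s) * g s := by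
        simp only [Φ, h, integral_same, ← intervalIntegral.integral_const_mul, ← mul_assoc,
          ← exp_add, sub_zero, ← sub_eq_add_neg]

/-- No symmetry of mixed derivatives is needed: the identity is the `τ`-derivative at `τ = t` of
`∫ w τ · ∂ₓ⁴w t = ∫ ∂ₓ²w τ · ∂ₓ²w t`, which holds for every `τ` by two integrations by parts. -/
theorem integral_timeDeriv_mul_fourthDeriv_eq_of_free_ends {s : Set ℝ} {a b t : ℝ}
    (hab : a ≤ b) (hs : IsCompact s) (ht : s ∈ 𝓝 t)
    {w wt wx wxx wxxx wxxxx wtxx : ℝ → ℝ → ℝ}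
    (hwt : ∀ x ∈ Icc a b, ∀ τ ∈ s, HasDerivAt (fun τ => w τ x) (wt τ x) τ)
    (hwx : ∀ τ ∈ s, ∀ x ∈ Icc a b, HasDerivAt (fun y => w τ y) (wx τ x) x)
    (hwxx : ∀ τ ∈ s, ∀ x ∈ Icc a b, HasDerivAt (fun y => wx τ y) (wxx τ x) x)
    (hwxxx : ∀ τ ∈ s, ∀ x ∈ Icc a b, HasDerivAt (fun y => wxx τ y) (wxxx τ x) x)
    (hwxxxx : ∀ x ∈ Icc a b, HasDerivAt (fun y => wxxx t y) (wxxxx t x) x)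
    (hwtxx : ∀ x ∈ Icc a b, ∀ τ ∈ s, HasDerivAt (fun τ => wxx τ x) (wtxx τ x) τ)
    (hcwt : ContinuousOn (fun p : ℝ × ℝ => wt p.1 p.2) (s ×ˢ Icc a b))
    (hcwtxx : ContinuousOn (fun p : ℝ × ℝ => wtxx p.1 p.2) (s ×ˢ Icc a b))
    (hcwxxxx : ContinuousOn (wxxxx t) (Icc a b))
    (hBC : wxx t a = 0 ∧ wxx t b = 0 ∧ wxxx t a = 0 ∧ wxxx t b = 0) :
    ∫ x in a..b, wt t x * wxxxx t x = ∫ x in a..b, wtxx t x * wxx t x := by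
  have hI : uIcc a b = Icc a b := uIcc_of_le hab
  have hcont : ∀ {f f' : ℝ → ℝ}, (∀ x ∈ Icc a b, HasDerivAt f (f' x) x) →
      ContinuousOn f (uIcc a b) := fun hf x hx =>
    (hf x (hI ▸ hx)).continuousAt.continuousWithinAt
  have ht' : t ∈ s := mem_of_mem_nhds ht
  obtain ⟨hxxa, hxxb, hxxxa, hxxxb⟩ := hBC
  have hsymm : ∀ τ ∈ s, ∫ x in a..b, w τ x * wxxxx t x = ∫ x in a..b, wxx τ x * wxx t x := by
    intro τ hτ
    rw [integral_mul_deriv_deriv_eq_deriv_deriv_mul (hI ▸ hwx τ hτ) (hI ▸ hwxx τ hτ)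
      (hI ▸ hwxxx t ht') (hI ▸ hwxxxx) (hcont (hwxxx τ hτ)).intervalIntegrable
      (hI ▸ hcwxxxx).intervalIntegrable]
    simp [hxxa, hxxb, hxxxa, hxxxb]
  have hw : HasDerivAt (fun τ => ∫ x in a..b, w τ x * wxxxx t x)
      (∫ x in a..b, wt t x * wxxxx t x) t :=
    hasDerivAt_intervalIntegral_of_continuousOn_uncurry (F := fun τ x => w τ x * wxxxx t x) hs ht
      (fun τ hτ => (hcont (hwx τ hτ)).mul (hI ▸ hcwxxxx))
      (by rw [hI]; exact hcwt.mul (hcwxxxx.comp continuousOn_snd fun p hp => hp.2))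
      fun τ hτ x hx => (hwt x (hI ▸ hx) τ hτ).mul_const _
  have hwxx : HasDerivAt (fun τ => ∫ x in a..b, wxx τ x * wxx t x)
      (∫ x in a..b, wtxx t x * wxx t x) t :=
    hasDerivAt_intervalIntegral_of_continuousOn_uncurry (F := fun τ x => wxx τ x * wxx t x) hs ht
      (fun τ hτ => (hcont (hwxxx τ hτ)).mul (hcont (hwxxx t ht')))
      (by rw [hI]; exact hcwtxx.mul ((hI ▸ hcont (hwxxx t ht')).comp continuousOn_snd
        fun p hp => hp.2))
      fun τ hτ x hx => (hwtxx x (hI ▸ hx) τ hτ).mul_const _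
  exact hw.unique (hwxx.congr_of_eventuallyEq (eventually_of_mem ht hsymm))

noncomputable def beamEnergy (L ρ μ : ℝ) (wt wxx : ℝ → ℝ → ℝ) (t : ℝ) : ℝ :=
  ∫ x in (0:ℝ)..L, (ρ * wt t x ^ 2 + μ * wxx t x ^ 2) / 2

theorem beamEnergy_eq_zero {L ρ μ t : ℝ} (hL : 0 ≤ L) {w wt wx wxx : ℝ → ℝ → ℝ}
    (hwx : ∀ x ∈ Icc 0 L, HasDerivAt (fun y => w t y) (wx t x) x)
    (hwxx : ∀ x ∈ Icc 0 L, HasDerivAt (fun y => wx t y) (wxx t x) x)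
    (hw : ∀ x ∈ Icc 0 L, w t x = 0) (hwt : ∀ x ∈ Icc 0 L, wt t x = 0) :
    beamEnergy L ρ μ wt wxx t = 0 := by
  have hderiv_zero : ∀ {u u' : ℝ → ℝ}, (∀ x ∈ Icc 0 L, HasDerivAt u (u' x) x) →
      EqOn u 0 (Ioo 0 L) → EqOn u' 0 (Ioo 0 L) := fun hu hu0 x hx =>
    (hu x (Ioo_subset_Icc_self hx)).unique <|
      (hasDerivAt_const x 0).congr_of_eventuallyEq (eventually_of_mem (Ioo_mem_nhds hx.1 hx.2) hu0)
  have hwxx0 : EqOn (wxx t) 0 (Ioo 0 L) :=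
    hderiv_zero hwxx <| hderiv_zero hwx fun x hx => hw x (Ioo_subset_Icc_self hx)
  rw [beamEnergy, integral_congr_Ioo hL (g := 0) fun x hx => by
    simp [hwt x (Ioo_subset_Icc_self hx), hwxx0 hx]]
  simp

theorem hasDerivAt_beamEnergy_eq_integral {L ρ μ T t : ℝ} (hL : 0 ≤ L) (ht : t ∈ Ioo 0 T)
    {wt wtt wxx wtxx : ℝ → ℝ → ℝ}
    (hwtt : ∀ x ∈ Icc 0 L, ∀ τ ∈ Icc 0 T, HasDerivAt (fun τ => wt τ x) (wtt τ x) τ)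
    (hwtxx : ∀ x ∈ Icc 0 L, ∀ τ ∈ Icc 0 T, HasDerivAt (fun τ => wxx τ x) (wtxx τ x) τ)
    (hcwt : ContinuousOn (fun p : ℝ × ℝ => wt p.1 p.2) (Icc 0 T ×ˢ Icc 0 L))
    (hcwtt : ContinuousOn (fun p : ℝ × ℝ => wtt p.1 p.2) (Icc 0 T ×ˢ Icc 0 L))
    (hcwxx : ContinuousOn (fun p : ℝ × ℝ => wxx p.1 p.2) (Icc 0 T ×ˢ Icc 0 L))
    (hcwtxx : ContinuousOn (fun p : ℝ × ℝ => wtxx p.1 p.2) (Icc 0 T ×ˢ Icc 0 L)) :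
    HasDerivAt (beamEnergy L ρ μ wt wxx)
      (∫ x in (0:ℝ)..L, (ρ * (wt t x * wtt t x) + μ * (wtxx t x * wxx t x))) t := by
  rw [← uIcc_of_le hL] at hwtt hwtxx hcwt hcwtt hcwxx hcwtxx
  refine hasDerivAt_intervalIntegral_of_continuousOn_uncurry
    (F := fun τ x => (ρ * wt τ x ^ 2 + μ * wxx τ x ^ 2) / 2)
    (F' := fun τ x => ρ * (wt τ x * wtt τ x) + μ * (wtxx τ x * wxx τ x))
    isCompact_Icc (Icc_mem_nhds ht.1 ht.2) (fun τ hτ => ?_) ?_ fun τ hτ x hx => ?_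
  · exact (((hcwt.uncurry_left τ hτ).pow 2).const_smul ρ |>.add
      (((hcwxx.uncurry_left τ hτ).pow 2).const_smul μ)).div_const 2
  · exact (continuousOn_const.mul (hcwt.mul hcwtt)).add (continuousOn_const.mul (hcwtxx.mul hcwxx))
  · exact ((((hwtt x hx τ hτ).pow 2).const_mul ρ).add
      (((hwtxx x hx τ hτ).pow 2).const_mul μ)).div_const 2 |>.congr_deriv (by push_cast; ring)

theorem hasDerivAt_beamEnergy {L ρ μ T t : ℝ} (hL : 0 ≤ L) (ht : t ∈ Ioo 0 T)
    {f w wt wtt wx wxx wxxx wxxxx wtxx : ℝ → ℝ → ℝ}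
    (hwt : ∀ x ∈ Icc 0 L, ∀ τ ∈ Icc 0 T, HasDerivAt (fun τ => w τ x) (wt τ x) τ)
    (hwtt : ∀ x ∈ Icc 0 L, ∀ τ ∈ Icc 0 T, HasDerivAt (fun τ => wt τ x) (wtt τ x) τ)
    (hwx : ∀ τ ∈ Icc 0 T, ∀ x ∈ Icc 0 L, HasDerivAt (fun y => w τ y) (wx τ x) x)
    (hwxx : ∀ τ ∈ Icc 0 T, ∀ x ∈ Icc 0 L, HasDerivAt (fun y => wx τ y) (wxx τ x) x)
    (hwxxx : ∀ τ ∈ Icc 0 T, ∀ x ∈ Icc 0 L, HasDerivAt (fun y => wxx τ y) (wxxx τ x) x)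
    (hwxxxx : ∀ x ∈ Icc 0 L, HasDerivAt (fun y => wxxx t y) (wxxxx t x) x)
    (hwtxx : ∀ x ∈ Icc 0 L, ∀ τ ∈ Icc 0 T, HasDerivAt (fun τ => wxx τ x) (wtxx τ x) τ)
    (hcwt : ContinuousOn (fun p : ℝ × ℝ => wt p.1 p.2) (Icc 0 T ×ˢ Icc 0 L))
    (hcwtt : ContinuousOn (fun p : ℝ × ℝ => wtt p.1 p.2) (Icc 0 T ×ˢ Icc 0 L))
    (hcwxx : ContinuousOn (fun p : ℝ × ℝ => wxx p.1 p.2) (Icc 0 T ×ˢ Icc 0 L))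
    (hcwtxx : ContinuousOn (fun p : ℝ × ℝ => wtxx p.1 p.2) (Icc 0 T ×ˢ Icc 0 L))
    (hcwxxxx : ContinuousOn (wxxxx t) (Icc 0 L)) (hf : ContinuousOn (f t) (Icc 0 L))
    (hPDE : ∀ x ∈ Ioo 0 L, ρ * wtt t x = -μ * wxxxx t x - f t x)
    (hBC : wxx t 0 = 0 ∧ wxx t L = 0 ∧ wxxx t 0 = 0 ∧ wxxx t L = 0) :
    HasDerivAt (beamEnergy L ρ μ wt wxx) (-∫ x in (0:ℝ)..L, f t x * wt t x) t := by
  have hsymm := integral_timeDeriv_mul_fourthDeriv_eq_of_free_ends hL isCompact_Icc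
    (Icc_mem_nhds ht.1 ht.2) hwt hwx hwxx hwxxx hwxxxx hwtxx hcwt hcwtxx hcwxxxx hBC
  refine (hasDerivAt_beamEnergy_eq_integral hL ht hwtt hwtxx hcwt hcwtt hcwxx hcwtxx).congr_deriv ?_
  rw [integral_congr_Ioo hL (g := fun x => -(f t x * wt t x) +
    μ * (wtxx t x * wxx t x - wt t x * wxxxx t x)) fun x hx => by
      linear_combination wt t x * hPDE x hx]
  have ht' := Ioo_subset_Icc_self ht
  rw [← uIcc_of_le hL] at hcwxxxx hf
  have hwt_t : ContinuousOn (wt t) (uIcc 0 L) := uIcc_of_le hL ▸ hcwt.uncurry_left t ht'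
  have hwxx_t : ContinuousOn (wxx t) (uIcc 0 L) := uIcc_of_le hL ▸ hcwxx.uncurry_left t ht'
  have hwtxx_t : ContinuousOn (wtxx t) (uIcc 0 L) := uIcc_of_le hL ▸ hcwtxx.uncurry_left t ht'
  rw [intervalIntegral.integral_add, intervalIntegral.integral_const_mul,
    intervalIntegral.integral_sub, hsymm, intervalIntegral.integral_neg]
  · ring
  · exact (hwtxx_t.mul hwxx_t).intervalIntegrable
  · exact (hwt_t.mul hcwxxxx).intervalIntegrable
  · exact (hf.mul hwt_t).intervalIntegrable.neg
  · exact (continuousOn_const.mul ((hwtxx_t.mul hwxx_t).sub (hwt_t.mul hcwxxxx))).intervalIntegrable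

theorem continuousOn_beamEnergy {L ρ μ T : ℝ} (hL : 0 ≤ L) {wt wxx : ℝ → ℝ → ℝ}
    (hcwt : ContinuousOn (fun p : ℝ × ℝ => wt p.1 p.2) (Icc 0 T ×ˢ Icc 0 L))
    (hcwxx : ContinuousOn (fun p : ℝ × ℝ => wxx p.1 p.2) (Icc 0 T ×ˢ Icc 0 L)) :
    ContinuousOn (beamEnergy L ρ μ wt wxx) (Icc 0 T) :=
  continuousOn_intervalIntegral_of_continuousOn_uncurry isCompact_Icc <| by
    rw [uIcc_of_le hL]
    exact (((hcwt.pow 2).const_smul ρ).add ((hcwxx.pow 2).const_smul μ)).div_const 2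

theorem neg_integral_mul_le_beamEnergy_add {L ρ μ t : ℝ} (hL : 0 ≤ L) (hρ : 0 < ρ) (hμ : 0 ≤ μ)
    {f wt wxx : ℝ → ℝ → ℝ} (hf : ContinuousOn (f t) (Icc 0 L))
    (hwt : ContinuousOn (wt t) (Icc 0 L)) (hwxx : ContinuousOn (wxx t) (Icc 0 L)) :
    -∫ x in (0:ℝ)..L, f t x * wt t x
      ≤ beamEnergy L ρ μ wt wxx t + ∫ x in (0:ℝ)..L, f t x ^ 2 / (2 * ρ) := by
  rw [← uIcc_of_le hL] at hf hwt hwxx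
  have hiE : IntervalIntegrable (fun x => (ρ * wt t x ^ 2 + μ * wxx t x ^ 2) / 2) volume 0 L :=
    ((((hwt.pow 2).const_smul ρ).add ((hwxx.pow 2).const_smul μ)).div_const 2).intervalIntegrable
  have hif : IntervalIntegrable (fun x => f t x ^ 2 / (2 * ρ)) volume 0 L :=
    ((hf.pow 2).div_const _).intervalIntegrable
  rw [beamEnergy, ← intervalIntegral.integral_neg, ← intervalIntegral.integral_add hiE hif]
  refine integral_mono_on hL (hf.mul hwt).neg.intervalIntegrable (hiE.add hif) fun x _ => ?_
  have hyoung : 0 ≤ (f t x + ρ * wt t x) ^ 2 / (2 * ρ) := by positivity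
  have hbend : 0 ≤ μ * wxx t x ^ 2 := by positivity
  have hexpand : (f t x + ρ * wt t x) ^ 2 / (2 * ρ)
      = f t x ^ 2 / (2 * ρ) + ρ * wt t x ^ 2 / 2 + f t x * wt t x := by
    field_simp; ring
  linarith

/-- **Gronwall-type energy estimate for the forced linear beam equation.**
Let `L, ρ, μ, T > 0`, `f` a continuous forcing term, and `w : [0,T] × [0,L] → ℝ` a classical
solution of `ρ ∂ₜ²w = -μ ∂ₓ⁴w - f` with free-end boundary conditions and zero initial data.
Then for every `t ∈ [0,T]`,
`∫₀ᴸ (ρ (∂ₜw(t))² + μ (∂ₓ²w(t))²)/2 dx ≤ (1/(2ρ)) ∫₀ᵗ∫₀ᴸ e^{t-s} f(s,x)² dx ds`. -/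
theorem gronwall_energy_estimate_forced_beam
    (L ρ μ T : ℝ) (hL : 0 < L) (hρ : 0 < ρ) (hμ : 0 < μ) (hT : 0 < T)
    (f : ℝ → ℝ → ℝ) (hf : ContinuousOn (fun p : ℝ × ℝ => f p.1 p.2) (Icc 0 T ×ˢ Icc 0 L))
    (w wt wtt wx wxx wxxx wxxxx wtxx : ℝ → ℝ → ℝ)
    -- time derivatives
    (hwt : ∀ x ∈ Icc 0 L, ∀ t ∈ Icc 0 T, HasDerivAt (fun τ => w τ x) (wt t x) t)
    (hwtt : ∀ x ∈ Icc 0 L, ∀ t ∈ Icc 0 T, HasDerivAt (fun τ => wt τ x) (wtt t x) t)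
    -- space derivatives
    (hwx : ∀ t ∈ Icc 0 T, ∀ x ∈ Icc 0 L, HasDerivAt (fun y => w t y) (wx t x) x)
    (hwxx : ∀ t ∈ Icc 0 T, ∀ x ∈ Icc 0 L, HasDerivAt (fun y => wx t y) (wxx t x) x)
    (hwxxx : ∀ t ∈ Icc 0 T, ∀ x ∈ Icc 0 L, HasDerivAt (fun y => wxx t y) (wxxx t x) x)
    (hwxxxx : ∀ t ∈ Icc 0 T, ∀ x ∈ Icc 0 L, HasDerivAt (fun y => wxxx t y) (wxxxx t x) x)
    -- mixed derivative ∂ₜ∂ₓ²w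
    (hwtxx : ∀ x ∈ Icc 0 L, ∀ t ∈ Icc 0 T, HasDerivAt (fun τ => wxx τ x) (wtxx t x) t)
    -- continuity of the derivatives on [0,T] × [0,L]
    (hcont : ∀ v ∈ ({wt, wtt, wx, wxx, wxxx, wxxxx, wtxx} : Set (ℝ → ℝ → ℝ)),
      ContinuousOn (fun p : ℝ × ℝ => v p.1 p.2) (Icc 0 T ×ˢ Icc 0 L))
    -- the PDE ρ ∂ₜ²w = -μ ∂ₓ⁴w - f on [0,T] × (0,L)
    (hPDE : ∀ t ∈ Icc 0 T, ∀ x ∈ Ioo 0 L,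
      ρ * wtt t x = -μ * wxxxx t x - f t x)
    -- free-end boundary conditions
    (hBC : ∀ t ∈ Icc 0 T,
      wxx t 0 = 0 ∧ wxx t L = 0 ∧ wxxx t 0 = 0 ∧ wxxx t L = 0)
    -- zero initial conditions
    (hw0 : ∀ x ∈ Icc 0 L, w 0 x = 0) (hwt0 : ∀ x ∈ Icc 0 L, wt 0 x = 0) :
    ∀ t ∈ Icc 0 T,
      (∫ x in (0:ℝ)..L, (ρ * (wt t x) ^ 2 + μ * (wxx t x) ^ 2) / 2)
        ≤ (1 / (2 * ρ)) * ∫ s in (0:ℝ)..t, ∫ x in (0:ℝ)..L,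
            Real.exp (t - s) * (f s x) ^ 2 := by
  have hcwt := hcont wt (by simp)
  have hcwtt := hcont wtt (by simp)
  have hcwxx := hcont wxx (by simp)
  have hcwxxxx := hcont wxxxx (by simp)
  have hcwtxx := hcont wtxx (by simp)
  have hderiv : ∀ t ∈ Ioo 0 T, HasDerivAt (beamEnergy L ρ μ wt wxx)
      (-∫ x in (0:ℝ)..L, f t x * wt t x) t := fun t ht =>
    have ht' := Ioo_subset_Icc_self ht
    hasDerivAt_beamEnergy hL.le ht hwt hwtt hwx hwxx hwxxx (hwxxxx t ht') hwtxx hcwt hcwtt hcwxx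
      hcwtxx (hcwxxxx.uncurry_left t ht') (hf.uncurry_left t ht') (hPDE t ht') (hBC t ht')
  have hforcing : ContinuousOn (fun s => ∫ x in (0:ℝ)..L, f s x ^ 2 / (2 * ρ)) (Icc 0 T) :=
    continuousOn_intervalIntegral_of_continuousOn_uncurry isCompact_Icc <| by
      rw [uIcc_of_le hL.le]; exact (hf.pow 2).div_const _
  have hE0 : beamEnergy L ρ μ wt wxx 0 = 0 :=
    beamEnergy_eq_zero hL.le (hwx 0 ⟨le_rfl, hT.le⟩) (hwxx 0 ⟨le_rfl, hT.le⟩) hw0 hwt0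
  intro t ht
  have hgronwall := le_exp_mul_add_integral_of_hasDerivAt_le_add
    (continuousOn_beamEnergy hL.le hcwt hcwxx) hforcing hderiv
    (fun s hs => have hs' := Ioo_subset_Icc_self hs
      neg_integral_mul_le_beamEnergy_add hL.le hρ hμ.le (hf.uncurry_left s hs')
        (hcwt.uncurry_left s hs') (hcwxx.uncurry_left s hs')) t ht
  rw [hE0, mul_zero, zero_add] at hgronwall
  refine hgronwall.trans_eq ?_
  rw [← intervalIntegral.integral_const_mul]
  congr 1 with s
  rw [← intervalIntegral.integral_const_mul, ← intervalIntegral.integral_const_mul]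
  congr 1 with x
  ring
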